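/- Every regular expression (in the restricted grammar without Kleene star, empty string, and empty set) denoting a language L over a finite alphabet Σ satisfies |R| ≥ opt, where opt is the supremum over feasible solutions x of ∑_{s∈L} x_s subject to: 0 ≤ x_s ≤ |s| for all strings s, and ∑_{s∈K₁K₂} x_s ≤ ∑_{s∈K₁} x_s + ∑_{s∈K₂} x_s for all pairs (K₁,K₂) of languages such that K₁, K₂, and K₁K₂ all lie in the regular-expression closure of L. -/
import Mathlib


/-- Regular expressions in the restricted grammar: alphabet symbols, binary union,
and concatenation only (no Kleene star, empty string, or empty set). -/
inductive RE (α : Type) : Type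
  | char : α → RE α
  | plus : RE α → RE α → RE α
  | cat : RE α → RE α → RE α

/-- The size of a regular expression: the number of alphabet symbols appearing in it. -/
def RE.size {α : Type} : RE α → ℕ
  | .char _ => 1
  | .plus r₁ r₂ => r₁.size + r₂.size
  | .cat r₁ r₂ => r₁.size + r₂.size

/-- Elementwise concatenation of two finite sets of strings. -/
def fcat {α : Type} [DecidableEq α] (A B : Finset (List α)) : Finset (List α) :=
  (A ×ˢ B).image (fun p => p.1 ++ p.2)

/-- The (finite) language denoted by a regular expression. -/
def RE.lang {α : Type} [DecidableEq α] : RE α → Finset (List α)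
  | .char a => {[a]}
  | .plus r₁ r₂ => r₁.lang ∪ r₂.lang
  | .cat r₁ r₂ => fcat r₁.lang r₂.lang

/-- The regular-expression closure `C(L)` of a language `L`: the smallest collection
containing `L` and closed under splitting a member as a concatenation or as a union of
two (nonempty) languages. -/
inductive Closure {α : Type} [DecidableEq α] (L : Finset (List α)) : Finset (List α) → Prop
  | base : Closure L L
  | catLeft {K₁ K₂ : Finset (List α)} : Closure L (fcat K₁ K₂) →
      K₁.Nonempty → K₂.Nonempty → Closure L K₁
  | catRight {K₁ K₂ : Finset (List α)} : Closure L (fcat K₁ K₂) →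
      K₁.Nonempty → K₂.Nonempty → Closure L K₂
  | unionLeft {K₁ K₂ : Finset (List α)} : Closure L (K₁ ∪ K₂) →
      K₁.Nonempty → K₂.Nonempty → Closure L K₁
  | unionRight {K₁ K₂ : Finset (List α)} : Closure L (K₁ ∪ K₂) →
      K₁.Nonempty → K₂.Nonempty → Closure L K₂

lemma lang_nonempty {α : Type} [DecidableEq α] (R : RE α) : R.lang.Nonempty := by
  induction R with
  | char a => exact ⟨[a], by simp [RE.lang]⟩
  | plus r₁ r₂ ih₁ ih₂ =>
      exact Finset.Nonempty.mono Finset.subset_union_left ih₁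
  | cat r₁ r₂ ih₁ ih₂ =>
      obtain ⟨a, ha⟩ := ih₁
      obtain ⟨b, hb⟩ := ih₂
      exact ⟨a ++ b, Finset.mem_image.mpr ⟨(a, b), Finset.mk_mem_product ha hb, rfl⟩⟩

lemma key_lemma {α : Type} [DecidableEq α] (L : Finset (List α))
    (x : List α → ℝ)
    (hbound : ∀ s : List α, 0 ≤ x s ∧ x s ≤ (s.length : ℝ))
    (hconcat : ∀ K₁ K₂ : Finset (List α), Closure L K₁ → Closure L K₂ →
      Closure L (fcat K₁ K₂) →
      ∑ s ∈ fcat K₁ K₂, x s ≤ ∑ s ∈ K₁, x s + ∑ s ∈ K₂, x s)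
    (R : RE α) (hR : Closure L R.lang) :
    ∑ s ∈ R.lang, x s ≤ (R.size : ℝ) := by
  induction R with
  | char a =>
      simp only [RE.lang, RE.size, Finset.sum_singleton, Nat.cast_one]
      simpa using (hbound [a]).2
  | plus r₁ r₂ ih₁ ih₂ =>
      have hc : Closure L (r₁.lang ∪ r₂.lang) := hR
      have h₁ := ih₁ (Closure.unionLeft hc (lang_nonempty r₁) (lang_nonempty r₂))
      have h₂ := ih₂ (Closure.unionRight hc (lang_nonempty r₁) (lang_nonempty r₂))
      have hsum : ∑ s ∈ r₁.lang ∪ r₂.lang, x s ≤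
          ∑ s ∈ r₁.lang, x s + ∑ s ∈ r₂.lang, x s := by
        have := Finset.sum_union_inter (s₁ := r₁.lang) (s₂ := r₂.lang) (f := x)
        have hnn : 0 ≤ ∑ s ∈ r₁.lang ∩ r₂.lang, x s :=
          Finset.sum_nonneg fun s _ => (hbound s).1
        linarith
      calc ∑ s ∈ (RE.plus r₁ r₂).lang, x s
          ≤ ∑ s ∈ r₁.lang, x s + ∑ s ∈ r₂.lang, x s := hsum
        _ ≤ (r₁.size : ℝ) + (r₂.size : ℝ) := add_le_add h₁ h₂
        _ = ((RE.plus r₁ r₂).size : ℝ) := by simp [RE.size]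
  | cat r₁ r₂ ih₁ ih₂ =>
      have hc : Closure L (fcat r₁.lang r₂.lang) := hR
      have hc₁ := Closure.catLeft hc (lang_nonempty r₁) (lang_nonempty r₂)
      have hc₂ := Closure.catRight hc (lang_nonempty r₁) (lang_nonempty r₂)
      have h₁ := ih₁ hc₁
      have h₂ := ih₂ hc₂
      have := hconcat r₁.lang r₂.lang hc₁ hc₂ hc
      calc ∑ s ∈ (RE.cat r₁ r₂).lang, x s
          ≤ ∑ s ∈ r₁.lang, x s + ∑ s ∈ r₂.lang, x s := this
        _ ≤ (r₁.size : ℝ) + (r₂.size : ℝ) := add_le_add h₁ h₂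
        _ = ((RE.cat r₁ r₂).size : ℝ) := by simp [RE.size]

theorem size_ge_lp_objective {α : Type} [Fintype α] [DecidableEq α]
    (R : RE α) (L : Finset (List α)) (hL : L = R.lang)
    (x : List α → ℝ)
    (hbound : ∀ s : List α, 0 ≤ x s ∧ x s ≤ (s.length : ℝ))
    (hconcat : ∀ K₁ K₂ : Finset (List α), Closure L K₁ → Closure L K₂ →
      Closure L (fcat K₁ K₂) →
      ∑ s ∈ fcat K₁ K₂, x s ≤ ∑ s ∈ K₁, x s + ∑ s ∈ K₂, x s) :
    ∑ s ∈ L, x s ≤ (R.size : ℝ) := by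
  subst hL
  exact key_lemma _ x hbound hconcat R Closure.base
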